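/- Let 0 ≤ r < n−1, s = ⌊r/2⌋, and q ∈ W(n,r+1). Then f(i,q) ∈ W(n,r) for every 1 ≤ i ≤ s+1, and g(i,q) ∈ W(n,r) for every 1 ≤ i ≤ t, where t = s if r is even and t = s+1 if r is odd. -/
import Mathlib


attribute [local instance] Classical.propDecidable

/-- A partition of `Fin n` is *crossing* if there are points `a < b < c < d` with
`a ∼ c`, `b ∼ d` and `¬ a ∼ b`. -/
def IsCrossing {n : ℕ} (p : Setoid (Fin n)) : Prop :=
  ∃ a b c d : Fin n, a < b ∧ b < c ∧ c < d ∧ p.r a c ∧ p.r b d ∧ ¬ p.r a b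

/-- The point `i` is a singleton of the partition `p`. -/
def IsSingletonPt {n : ℕ} (p : Setoid (Fin n)) (i : Fin n) : Prop :=
  ∀ j : Fin n, p.r i j → j = i

/-- `W(n,r)` (points of `Fin n` are numbered `1,…,n`, so the 1-indexed point `j` is the
index `j-1`): the set of noncrossing partitions `p` of `Fin n` such that, with
`s = ⌊r/2⌋`, none of the points `1,…,s` (for even `r`) resp. `1,…,s+1` (for odd `r`) is a
singleton of `p`, and the points `1,…,s+1` lie in pairwise different blocks of `p`. -/
def Wset (n r : ℕ) : Set (Setoid (Fin n)) :=
  {p | ¬ IsCrossing p ∧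
    (∀ i : Fin n, (i : ℕ) < (if r % 2 = 0 then r / 2 else r / 2 + 1) → ¬ IsSingletonPt p i) ∧
    (∀ i j : Fin n, (i : ℕ) ≤ r / 2 → (j : ℕ) ≤ r / 2 → p.r i j → i = j)}
/-- The block of `q` containing the point `x`. -/
def blkOf {n : ℕ} (q : Setoid (Fin n)) (x : Fin n) : Set (Fin n) := {y | q.r x y}

/-- `X(j)`: the block of `q` containing the 1-indexed point `j` (index `j-1`). -/
def Xset {n : ℕ} (q : Setoid (Fin n)) (j : ℕ) : Set (Fin n) :=
  {y | ∃ h : j - 1 < n, q.r ⟨j - 1, h⟩ y}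

/-- `K(j) = X(j) \ {j}`: the block of the 1-indexed point `j` with `j` removed. -/
def Kset {n : ℕ} (q : Setoid (Fin n)) (j : ℕ) : Set (Fin n) :=
  {y | (∃ h : j - 1 < n, q.r ⟨j - 1, h⟩ y) ∧ (y : ℕ) ≠ j - 1}

/-- The set `{j}` for a 1-indexed point `j` (index `j-1`). -/
def ptSet (n j : ℕ) : Set (Fin n) := {y | (y : ℕ) = j - 1}

/-- The block of the point `x` in the partition `f(i,q)` (with `s = ⌊r/2⌋`, `q` a
partition in `W(n,r+1)` and `1 ≤ i ≤ s+1`, all points 1-indexed): the blocks of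
`f(i,q)` are the unchanged blocks of `q` not meeting the points `i,…,s+1` (and, for odd
`r`, different from `X(s+2)`), the block `K(i)`, the blocks `{j} ∪ K(j+1)` for
`i ≤ j ≤ s`, and the block of the point `s+1`, which is `{s+1}` for even `r` and
`{s+1} ∪ X(s+2)` for odd `r`. -/
noncomputable def fBlk {n : ℕ} (r i : ℕ) (q : Setoid (Fin n)) (x : Fin n) : Set (Fin n) :=
  if i ≤ (x : ℕ) + 1 ∧ (x : ℕ) + 1 ≤ r / 2 then
    ptSet n ((x : ℕ) + 1) ∪ Kset q ((x : ℕ) + 2)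
  else if (x : ℕ) = r / 2 then
    (if r % 2 = 0 then ptSet n (r / 2 + 1) else ptSet n (r / 2 + 1) ∪ Xset q (r / 2 + 2))
  else if x ∈ Kset q i then Kset q i
  else if ∃ j : ℕ, i + 1 ≤ j ∧ j ≤ r / 2 + 1 ∧ x ∈ Kset q j then
    ⋃ j ∈ {j : ℕ | i + 1 ≤ j ∧ j ≤ r / 2 + 1 ∧ x ∈ Kset q j},
      (ptSet n (j - 1) ∪ Kset q j)
  else if r % 2 = 1 ∧ x ∈ Xset q (r / 2 + 2) then
    ptSet n (r / 2 + 1) ∪ Xset q (r / 2 + 2)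
  else blkOf q x

/-- The partition `f(i,q)`: its blocks are the fibres of the block function `fBlk`. -/
noncomputable def fPart {n : ℕ} (r i : ℕ) (q : Setoid (Fin n)) : Setoid (Fin n) :=
  Setoid.ker (fBlk r i q)

/-- The block of the point `x` in the partition `g(i,q)` (with `s = ⌊r/2⌋`, `q` a
partition in `W(n,r+1)`, `1 ≤ i ≤ s` or, when `r` is odd, also `i = s+1`): `g(i,q)` is
defined like `f(i,q)` except that the block `K(i)` is replaced by
`{i} ∪ K(i) ∪ K(i+1)` and the blocks `{j} ∪ K(j+1)` are formed only for `i < j ≤ s`;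
for odd `r` and `i = s+1`, `g(s+1,q)` is obtained from `q` by merging the blocks
`X(s+1)` and `X(s+2)`. -/
noncomputable def gBlk {n : ℕ} (r i : ℕ) (q : Setoid (Fin n)) (x : Fin n) : Set (Fin n) :=
  if i = r / 2 + 1 then
    (if x ∈ Xset q (r / 2 + 1) ∪ Xset q (r / 2 + 2) then
      Xset q (r / 2 + 1) ∪ Xset q (r / 2 + 2)
    else blkOf q x)
  else
    if i + 1 ≤ (x : ℕ) + 1 ∧ (x : ℕ) + 1 ≤ r / 2 then
      ptSet n ((x : ℕ) + 1) ∪ Kset q ((x : ℕ) + 2)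
    else if (x : ℕ) = r / 2 then
      (if r % 2 = 0 then ptSet n (r / 2 + 1) else ptSet n (r / 2 + 1) ∪ Xset q (r / 2 + 2))
    else if (x : ℕ) + 1 = i ∨ x ∈ Kset q i ∨ x ∈ Kset q (i + 1) then
      ptSet n i ∪ Kset q i ∪ Kset q (i + 1)
    else if ∃ j : ℕ, i + 2 ≤ j ∧ j ≤ r / 2 + 1 ∧ x ∈ Kset q j then
      ⋃ j ∈ {j : ℕ | i + 2 ≤ j ∧ j ≤ r / 2 + 1 ∧ x ∈ Kset q j},
        (ptSet n (j - 1) ∪ Kset q j)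
    else if r % 2 = 1 ∧ x ∈ Xset q (r / 2 + 2) then
      ptSet n (r / 2 + 1) ∪ Xset q (r / 2 + 2)
    else blkOf q x

/-- The partition `g(i,q)`: its blocks are the fibres of the block function `gBlk`. -/
noncomputable def gPart {n : ℕ} (r i : ℕ) (q : Setoid (Fin n)) : Setoid (Fin n) :=
  Setoid.ker (gBlk r i q)

section Merge
variable {n : ℕ}

/-- merge the classes of `e` and `e'` in `q`. -/
def mergeSetoid (q : Setoid (Fin n)) (e e' : Fin n) : Setoid (Fin n) :=
  ⟨fun a b => q.r a b ∨ ((q.r a e ∨ q.r a e') ∧ (q.r b e ∨ q.r b e')),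
   ⟨fun a => Or.inl (q.iseqv.refl a),
    fun h => h.elim (fun h => Or.inl (q.iseqv.symm h)) (fun h => Or.inr ⟨h.2, h.1⟩),
    fun {a b c} h1 h2 => by
      rcases h1 with h1 | h1
      · rcases h2 with h2 | h2
        · exact Or.inl (q.iseqv.trans h1 h2)
        · exact Or.inr ⟨h2.1.imp (q.iseqv.trans h1) (q.iseqv.trans h1), h2.2⟩
      · rcases h2 with h2 | h2
        · exact Or.inr ⟨h1.1,
            h1.2.imp (fun hb => q.iseqv.trans (q.iseqv.symm h2) hb)
              (fun hb => q.iseqv.trans (q.iseqv.symm h2) hb)⟩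
        · exact Or.inr ⟨h1.1, h2.2⟩⟩⟩

lemma mergeSetoid_r {q : Setoid (Fin n)} {e e' a b : Fin n} :
    (mergeSetoid q e e').r a b ↔
      (q.r a b ∨ ((q.r a e ∨ q.r a e') ∧ (q.r b e ∨ q.r b e'))) := Iff.rfl

lemma merge_noncrossing {q : Setoid (Fin n)} (hq : ¬ IsCrossing q) (e e' : Fin n)
    (he : (e' : ℕ) = (e : ℕ) + 1) : ¬ IsCrossing (mergeSetoid q e e') := by
  rintro ⟨a, b, c, d, hab, hbc, hcd, hac, hbd, hnab⟩
  rw [mergeSetoid_r] at hac hbd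
  have hnab' : ¬ q.r a b := fun h => hnab (Or.inl h)
  have hnE : ¬ ((q.r a e ∨ q.r a e') ∧ (q.r b e ∨ q.r b e')) := fun h => hnab (Or.inr h)
  rcases hac with hac | ⟨hEa, hEc⟩
  · rcases hbd with hbd | ⟨hEb, hEd⟩
    · exact hq ⟨a, b, c, d, hab, hbc, hcd, hac, hbd, hnab'⟩
    · have hnEa : ¬ (q.r a e ∨ q.r a e') := fun h => hnE ⟨h, hEb⟩
      have hnEc : ¬ (q.r c e ∨ q.r c e') := fun h =>
        hnEa (h.imp (q.iseqv.trans hac) (q.iseqv.trans hac))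
      obtain ⟨xb, hxbm, hxb⟩ : ∃ x : Fin n, ((x : ℕ) = e ∨ (x : ℕ) = e') ∧ q.r b x := by
        rcases hEb with h | h
        · exact ⟨e, Or.inl rfl, h⟩
        · exact ⟨e', Or.inr rfl, h⟩
      obtain ⟨xd, hxdm, hxd⟩ : ∃ x : Fin n, ((x : ℕ) = e ∨ (x : ℕ) = e') ∧ q.r d x := by
        rcases hEd with h | h
        · exact ⟨e, Or.inl rfl, h⟩
        · exact ⟨e', Or.inr rfl, h⟩
      have hcne : (c : ℕ) ≠ e := fun h => hnEc (Or.inl (by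
        have : c = e := Fin.ext h
        exact this ▸ q.iseqv.refl c))
      have hcne' : (c : ℕ) ≠ e' := fun h => hnEc (Or.inr (by
        have : c = e' := Fin.ext h
        exact this ▸ q.iseqv.refl c))
      rcases lt_or_gt_of_ne hcne with hce | hce
      · -- c < e ≤ xb : quadruple (a, b, c, xb)
        refine hq ⟨a, b, c, xb, hab, hbc, ?_, hac, hxb, hnab'⟩
        have : (c : ℕ) < (xb : ℕ) := by rcases hxbm with h | h <;> omega
        exact Fin.lt_def.mpr this
      · have hce2 : (e' : ℕ) < c := by omega
        have hane : (a : ℕ) ≠ e := fun h => hnEa (Or.inl (by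
          have : a = e := Fin.ext h
          exact this ▸ q.iseqv.refl a))
        have hane' : (a : ℕ) ≠ e' := fun h => hnEa (Or.inr (by
          have : a = e' := Fin.ext h
          exact this ▸ q.iseqv.refl a))
        rcases lt_or_gt_of_ne hane with hae | hae
        · -- quadruple (a, xd, c, d)
          refine hq ⟨a, xd, c, d, ?_, ?_, hcd, hac, q.iseqv.symm hxd, ?_⟩
          · exact Fin.lt_def.mpr (by rcases hxdm with h | h <;> omega)
          · exact Fin.lt_def.mpr (by rcases hxdm with h | h <;> omega)
          · intro h
            apply hnEa
            rcases hxdm with hx | hx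
            · exact Or.inl (by have : xd = e := Fin.ext hx; exact this ▸ h)
            · exact Or.inr (by have : xd = e' := Fin.ext hx; exact this ▸ h)
        · -- a > e', quadruple (xb, a, b, c)
          have hae2 : (e' : ℕ) < a := by omega
          refine hq ⟨xb, a, b, c, ?_, hab, hbc, hxb |> q.iseqv.symm |> (fun h => ?_), hac, ?_⟩
          · exact Fin.lt_def.mpr (by rcases hxbm with h | h <;> omega)
          · exact h
          · intro h
            apply hnEa
            rcases hxbm with hx | hx
            · exact Or.inl (by have : xb = e := Fin.ext hx; exact this ▸ q.iseqv.symm h)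
            · exact Or.inr (by have : xb = e' := Fin.ext hx; exact this ▸ q.iseqv.symm h)
  · rcases hbd with hbd | ⟨hEb, hEd⟩
    · -- a,c attached, b ∼ d
      have hnEb : ¬ (q.r b e ∨ q.r b e') := fun h => hnE ⟨hEa, h⟩
      have hnEd : ¬ (q.r d e ∨ q.r d e') := fun h =>
        hnEb (h.imp (q.iseqv.trans hbd) (q.iseqv.trans hbd))
      by_cases hqac : q.r a c
      · exact hq ⟨a, b, c, d, hab, hbc, hcd, hqac, hbd, hnab'⟩
      obtain ⟨xa, hxam, hxa⟩ : ∃ x : Fin n, ((x : ℕ) = e ∨ (x : ℕ) = e') ∧ q.r a x := by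
        rcases hEa with h | h
        · exact ⟨e, Or.inl rfl, h⟩
        · exact ⟨e', Or.inr rfl, h⟩
      obtain ⟨xc, hxcm, hxc⟩ : ∃ x : Fin n, ((x : ℕ) = e ∨ (x : ℕ) = e') ∧ q.r c x := by
        rcases hEc with h | h
        · exact ⟨e, Or.inl rfl, h⟩
        · exact ⟨e', Or.inr rfl, h⟩
      have hdne : (d : ℕ) ≠ e := fun h => hnEd (Or.inl (by
        have : d = e := Fin.ext h; exact this ▸ q.iseqv.refl d))
      have hdne' : (d : ℕ) ≠ e' := fun h => hnEd (Or.inr (by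
        have : d = e' := Fin.ext h; exact this ▸ q.iseqv.refl d))
      have hbne : (b : ℕ) ≠ e := fun h => hnEb (Or.inl (by
        have : b = e := Fin.ext h; exact this ▸ q.iseqv.refl b))
      have hbne' : (b : ℕ) ≠ e' := fun h => hnEb (Or.inr (by
        have : b = e' := Fin.ext h; exact this ▸ q.iseqv.refl b))
      rcases lt_or_gt_of_ne hdne with hde | hde
      · -- d < e: quadruple (b, c, d, xc)
        refine hq ⟨b, c, d, xc, hbc, hcd, ?_, hbd, hxc, ?_⟩
        · exact Fin.lt_def.mpr (by rcases hxcm with h | h <;> omega)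
        · intro h
          have hbxc : q.r b xc := q.iseqv.trans h hxc
          apply hnEb
          rcases hxcm with hx | hx
          · exact Or.inl (by have : xc = e := Fin.ext hx; exact this ▸ hbxc)
          · exact Or.inr (by have : xc = e' := Fin.ext hx; exact this ▸ hbxc)
      · have hde2 : (e' : ℕ) < d := by omega
        rcases lt_or_gt_of_ne hbne with hbe | hbe
        · -- b < e: quadruple (a, b, xa, d)
          refine hq ⟨a, b, xa, d, hab, ?_, ?_, hxa, hbd, hnab'⟩
          · exact Fin.lt_def.mpr (by rcases hxam with h | h <;> omega)
          · exact Fin.lt_def.mpr (by rcases hxam with h | h <;> omega)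
        · -- b > e': quadruple (xc, b, c, d)
          have hbe2 : (e' : ℕ) < b := by omega
          refine hq ⟨xc, b, c, d, ?_, hbc, hcd, q.iseqv.symm hxc, hbd, ?_⟩
          · exact Fin.lt_def.mpr (by rcases hxcm with h | h <;> omega)
          · intro h
            apply hnEb
            rcases hxcm with hx | hx
            · exact Or.inl (by have : xc = e := Fin.ext hx; exact this ▸ q.iseqv.symm h)
            · exact Or.inr (by have : xc = e' := Fin.ext hx; exact this ▸ q.iseqv.symm h)
    · exact hnab (Or.inr ⟨hEa, hEb⟩)
end Merge

section Key
variable {n : ℕ}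

/-- Abstract noncrossing criterion for a partition given as the kernel of a block map `B`:
below the threshold `t0` every point's block is determined by a set `A` of attach points
(related in the noncrossing setoid `q'`), and above `t0` the partition agrees with `q'`. -/
lemma key_noncrossing (q' : Setoid (Fin n)) (hq' : ¬ IsCrossing q') (t0 : ℕ)
    (B : Fin n → Set (Fin n)) (A : ℕ → Set ℕ)
    (hW1 : ∀ x y : Fin n, t0 ≤ (x : ℕ) → t0 ≤ (y : ℕ) → (B x = B y ↔ q'.r x y))
    (hW2 : ∀ a c : Fin n, (a : ℕ) < t0 → t0 ≤ (c : ℕ) →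
      (B a = B c ↔ ∃ u ∈ A (a : ℕ), ∃ hu : u < n, q'.r ⟨u, hu⟩ c))
    (hW3 : ∀ a b : Fin n, (a : ℕ) < t0 → (b : ℕ) < t0 → B a = B b → a = b)
    (hW4 : ∀ m m' : ℕ, m < m' → m' < t0 → ∀ u ∈ A m, ∀ u' ∈ A m', u < u')
    (hW5 : ∀ m : ℕ, m < t0 → ∀ u ∈ A m, u ≤ t0) :
    ¬ IsCrossing (Setoid.ker B) := by
  rintro ⟨a, b, c, d, hab, hbc, hcd, hac, hbd, hnab⟩
  have hac' : B a = B c := hac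
  have hbd' : B b = B d := hbd
  have hnab' : B a ≠ B b := hnab
  by_cases hc : (c : ℕ) < t0
  · -- a, c both initial : contradiction with a < c
    have : a = c := hW3 a c (by have := Fin.lt_def.mp (hab.trans hbc); omega) hc hac'
    exact absurd (hab.trans hbc) (this ▸ lt_irrefl c)
  push_neg at hc
  have hd : t0 ≤ (d : ℕ) := le_trans hc (le_of_lt (Fin.lt_def.mp hcd))
  by_cases ha : (a : ℕ) < t0
  · by_cases hb : (b : ℕ) < t0
    · -- Case 2 : a, b initial, c, d tail
      obtain ⟨ua, hua, huan, hruac⟩ := (hW2 a c ha hc).mp hac'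
      obtain ⟨ub, hub, hubn, hrubd⟩ := (hW2 b d hb hd).mp hbd'
      have huaub : ua < ub := hW4 _ _ (Fin.lt_def.mp hab) hb ua hua ub hub
      by_cases hubc : ub < (c : ℕ)
      · -- crossing (ua, ub, c, d) in q'
        refine hq' ⟨⟨ua, huan⟩, ⟨ub, hubn⟩, c, d, Fin.lt_def.mpr huaub,
          Fin.lt_def.mpr hubc, hcd, hruac, hrubd, ?_⟩
        intro h
        have : q'.r ⟨ub, hubn⟩ c := q'.iseqv.trans (q'.iseqv.symm h) hruac
        exact hnab' (hac'.trans ((hW2 b c hb hc).mpr ⟨ub, hub, hubn, this⟩).symm)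
      · -- ub = c
        have : (c : ℕ) = ub := le_antisymm (by omega) (hW5 _ hb ub hub |>.trans hc)
        have hcfin : (⟨ub, hubn⟩ : Fin n) = c := Fin.ext this.symm
        have : q'.r ⟨ub, hubn⟩ c := hcfin ▸ q'.iseqv.refl c
        exact hnab' (hac'.trans ((hW2 b c hb hc).mpr ⟨ub, hub, hubn, this⟩).symm)
    · -- Case 3 : only a initial
      push_neg at hb
      obtain ⟨ua, hua, huan, hruac⟩ := (hW2 a c ha hc).mp hac'
      have hrbd : q'.r b d := (hW1 b d hb hd).mp hbd'
      by_cases huab : ua < (b : ℕ)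
      · refine hq' ⟨⟨ua, huan⟩, b, c, d, Fin.lt_def.mpr huab, hbc, hcd, hruac, hrbd, ?_⟩
        intro h
        exact hnab' ((hW2 a b ha hb).mpr ⟨ua, hua, huan, h⟩)
      · have : (b : ℕ) = ua := le_antisymm (by omega) (hW5 _ ha ua hua |>.trans hb)
        have hbfin : (⟨ua, huan⟩ : Fin n) = b := Fin.ext this.symm
        exact hnab' ((hW2 a b ha hb).mpr ⟨ua, hua, huan, hbfin ▸ q'.iseqv.refl b⟩)
  · -- Case 1 : all tail
    push_neg at ha
    have hb : t0 ≤ (b : ℕ) := le_trans ha (le_of_lt (Fin.lt_def.mp hab))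
    exact hq' ⟨a, b, c, d, hab, hbc, hcd, (hW1 a c ha hc).mp hac',
      (hW1 b d hb hd).mp hbd', fun h => hnab' ((hW1 a b ha hb).mpr h)⟩
end Key

section Finst
variable {n r i : ℕ} {q : Setoid (Fin n)}

lemma mem_Kset_iff {j : ℕ} (hj : j - 1 < n) {x : Fin n} :
    x ∈ Kset q j ↔ (q.r ⟨j - 1, hj⟩ x ∧ (x : ℕ) ≠ j - 1) :=
  ⟨fun ⟨⟨_, h⟩, hne⟩ => ⟨h, hne⟩, fun ⟨h, hne⟩ => ⟨⟨hj, h⟩, hne⟩⟩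

lemma mem_Xset_iff {j : ℕ} (hj : j - 1 < n) {x : Fin n} :
    x ∈ Xset q j ↔ q.r ⟨j - 1, hj⟩ x :=
  ⟨fun ⟨_, h⟩ => h, fun h => ⟨hj, h⟩⟩

/-- attach points of the partition `f(i,q)`. -/
def fAtt (r i : ℕ) : ℕ → Set ℕ := fun m =>
  if m + 1 < i then {m} else if m + 1 ≤ r / 2 then {m + 1}
  else if r % 2 = 1 then {r / 2 + 1} else ∅

lemma fBlk_T1 {x : Fin n} (h1 : i ≤ (x : ℕ) + 1) (h2 : (x : ℕ) + 1 ≤ r / 2) :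
    fBlk r i q x = ptSet n ((x : ℕ) + 1) ∪ Kset q ((x : ℕ) + 2) := by
  unfold fBlk; rw [if_pos ⟨h1, h2⟩]

lemma fBlk_T2 {x : Fin n} (h : (x : ℕ) = r / 2) :
    fBlk r i q x =
      (if r % 2 = 0 then ptSet n (r / 2 + 1) else ptSet n (r / 2 + 1) ∪ Xset q (r / 2 + 2)) := by
  unfold fBlk; rw [if_neg (by omega), if_pos h]

section withHd
variable (hn : r + 2 ≤ n)
  (hd : ∀ u : ℕ, ∀ hu : u < n, ∀ x : Fin n,
    u ≤ (r + 1) / 2 → (x : ℕ) ≤ (r + 1) / 2 → q.r ⟨u, hu⟩ x → (x : ℕ) = u)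
  (hi1 : 1 ≤ i) (hi2 : i ≤ r / 2 + 1)
include hn hd hi1 hi2

lemma fBlk_T3 {x : Fin n} (hx : (x : ℕ) + 1 < i) :
    fBlk r i q x = blkOf q x := by
  unfold fBlk
  have hK : ∀ j : ℕ, 1 ≤ j → j ≤ r / 2 + 1 → (x : ℕ) ≠ j - 1 → x ∉ Kset q j := by
    intro j h1 h2 hne hmem
    obtain ⟨⟨hjn, hr⟩, -⟩ := hmem
    have := hd (j - 1) hjn x (by omega) (by omega) hr
    omega
  rw [if_neg (by omega), if_neg (by omega),
    if_neg (hK i hi1 hi2 (by omega)),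
    if_neg (by rintro ⟨j, hj1, hj2, hj3⟩; exact hK j (by omega) hj2 (by omega) hj3),
    if_neg (by
      rintro ⟨hodd, ⟨hX, hr⟩⟩
      have := hd (r / 2 + 1) hX x (by omega) (by omega) hr
      omega)]

lemma fBlk_T4a {x : Fin n} (hx : r / 2 + 1 ≤ (x : ℕ)) (hin : i - 1 < n)
    (h : q.r ⟨i - 1, hin⟩ x) : fBlk r i q x = Kset q i := by
  unfold fBlk
  rw [if_neg (by omega), if_neg (by omega), if_pos ((mem_Kset_iff hin).mpr ⟨h, by omega⟩)]

lemma fBlk_T4b {x : Fin n} (hx : r / 2 + 1 ≤ (x : ℕ)) {j : ℕ} (hj1 : i + 1 ≤ j)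
    (hj2 : j ≤ r / 2 + 1) (hjn : j - 1 < n) (h : q.r ⟨j - 1, hjn⟩ x) :
    fBlk r i q x = ptSet n (j - 1) ∪ Kset q j := by
  have hxj : x ∈ Kset q j := (mem_Kset_iff hjn).mpr ⟨h, by omega⟩
  have huniq : ∀ j' : ℕ, i + 1 ≤ j' → j' ≤ r / 2 + 1 → x ∈ Kset q j' → j' = j := by
    rintro j' h1 h2 ⟨⟨hj'n, hr'⟩, -⟩
    have h3 : q.r ⟨j' - 1, hj'n⟩ ⟨j - 1, hjn⟩ := q.iseqv.trans hr' (q.iseqv.symm h)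
    have h4 : j - 1 = j' - 1 := hd (j' - 1) hj'n ⟨j - 1, hjn⟩ (by omega)
      (by show j - 1 ≤ (r + 1) / 2; omega) h3
    omega
  have hnKi : x ∉ Kset q i := by
    rintro ⟨⟨hin, hri⟩, -⟩
    have h3 : q.r ⟨i - 1, hin⟩ ⟨j - 1, hjn⟩ := q.iseqv.trans hri (q.iseqv.symm h)
    have h4 : j - 1 = i - 1 := hd (i - 1) hin ⟨j - 1, hjn⟩ (by omega)
      (by show j - 1 ≤ (r + 1) / 2; omega) h3
    omega
  unfold fBlk
  rw [if_neg (by omega), if_neg (by omega), if_neg hnKi, if_pos ⟨j, hj1, hj2, hxj⟩]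
  have hset : {j' : ℕ | i + 1 ≤ j' ∧ j' ≤ r / 2 + 1 ∧ x ∈ Kset q j'} = {j} := by
    ext j'
    simp only [Set.mem_setOf_eq, Set.mem_singleton_iff]
    exact ⟨fun ⟨a, b, c⟩ => huniq j' a b c, fun h' => h' ▸ ⟨hj1, hj2, hxj⟩⟩
  rw [hset, Set.biUnion_singleton]

lemma fBlk_T4c (hodd : r % 2 = 1) {x : Fin n} (hx : r / 2 + 1 ≤ (x : ℕ)) (hsn : r / 2 + 1 < n)
    (h : q.r ⟨r / 2 + 1, hsn⟩ x) :
    fBlk r i q x = ptSet n (r / 2 + 1) ∪ Xset q (r / 2 + 2) := by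
  have hnKi : x ∉ Kset q i := by
    rintro ⟨⟨hin, hri⟩, -⟩
    have h3 : q.r ⟨i - 1, hin⟩ ⟨r / 2 + 1, hsn⟩ := q.iseqv.trans hri (q.iseqv.symm h)
    have h4 : r / 2 + 1 = i - 1 := hd (i - 1) hin ⟨r / 2 + 1, hsn⟩ (by omega)
      (by show r / 2 + 1 ≤ (r + 1) / 2; omega) h3
    omega
  have hnKj : ¬ ∃ j : ℕ, i + 1 ≤ j ∧ j ≤ r / 2 + 1 ∧ x ∈ Kset q j := by
    rintro ⟨j, hj1, hj2, ⟨⟨hjn, hrj⟩, -⟩⟩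
    have h3 : q.r ⟨j - 1, hjn⟩ ⟨r / 2 + 1, hsn⟩ := q.iseqv.trans hrj (q.iseqv.symm h)
    have h4 : r / 2 + 1 = j - 1 := hd (j - 1) hjn ⟨r / 2 + 1, hsn⟩ (by omega)
      (by show r / 2 + 1 ≤ (r + 1) / 2; omega) h3
    omega
  unfold fBlk
  rw [if_neg (by omega), if_neg (by omega), if_neg hnKi, if_neg hnKj,
    if_pos ⟨hodd, ⟨(by omega : r / 2 + 2 - 1 < n), h⟩⟩]

omit hn hd hi1 hi2 in
lemma fBlk_T4d {x : Fin n} (hx : r / 2 + 1 ≤ (x : ℕ))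
    (h1 : x ∉ Kset q i) (h2 : ¬ ∃ j : ℕ, i + 1 ≤ j ∧ j ≤ r / 2 + 1 ∧ x ∈ Kset q j)
    (h3 : ¬ (r % 2 = 1 ∧ x ∈ Xset q (r / 2 + 2))) : fBlk r i q x = blkOf q x := by
  unfold fBlk
  rw [if_neg (by omega), if_neg (by omega), if_neg h1, if_neg h2, if_neg h3]

end withHd

lemma fBlk_self (x : Fin n) : x ∈ fBlk r i q x := by
  unfold fBlk
  split_ifs with h1 h2 h3 h4 h5 h6
  · exact Or.inl rfl
  · exact h2
  · exact Or.inl h2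
  · exact h4
  · obtain ⟨j, hj⟩ := h5
    exact Set.mem_biUnion hj (Or.inr hj.2.2)
  · exact Or.inr h6.2
  · exact q.iseqv.refl x

end Finst

set_option linter.unusedSectionVars false
section FW
variable {n r i : ℕ} {q : Setoid (Fin n)}
  (hn : r + 2 ≤ n)
  (hd : ∀ u : ℕ, ∀ hu : u < n, ∀ x : Fin n,
    u ≤ (r + 1) / 2 → (x : ℕ) ≤ (r + 1) / 2 → q.r ⟨u, hu⟩ x → (x : ℕ) = u)
  (hi1 : 1 ≤ i) (hi2 : i ≤ r / 2 + 1)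
include hn hd hi1 hi2

lemma fW1 (x y : Fin n) (hx : r / 2 + 1 ≤ (x : ℕ)) (hy : r / 2 + 1 ≤ (y : ℕ)) :
    fBlk r i q x = fBlk r i q y ↔ q.r x y := by
  have hin : i - 1 < n := by omega
  have hsn : r / 2 + 1 < n := by omega
  constructor
  · intro hB
    have hyB : y ∈ fBlk r i q x := hB ▸ fBlk_self y
    by_cases h4a : q.r ⟨i - 1, hin⟩ x
    · rw [fBlk_T4a hn hd hi1 hi2 hx hin h4a] at hyB
      obtain ⟨⟨h', hr⟩, -⟩ := hyB
      exact q.iseqv.trans (q.iseqv.symm h4a) hr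
    by_cases h4b : ∃ j : ℕ, i + 1 ≤ j ∧ j ≤ r / 2 + 1 ∧ x ∈ Kset q j
    · obtain ⟨j, hj1, hj2, ⟨⟨hjn, hr⟩, -⟩⟩ := h4b
      rw [fBlk_T4b hn hd hi1 hi2 hx hj1 hj2 hjn hr] at hyB
      rcases hyB with hy1 | ⟨⟨h', hr'⟩, -⟩
      · have : (y : ℕ) = j - 1 - 1 := hy1
        omega
      · exact q.iseqv.trans (q.iseqv.symm hr) hr'
    by_cases h4c : r % 2 = 1 ∧ q.r ⟨r / 2 + 1, hsn⟩ x
    · rw [fBlk_T4c hn hd hi1 hi2 h4c.1 hx hsn h4c.2] at hyB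
      rcases hyB with hy1 | ⟨h', hr'⟩
      · have : (y : ℕ) = r / 2 + 1 - 1 := hy1
        omega
      · exact q.iseqv.trans (q.iseqv.symm h4c.2) hr'
    · rw [fBlk_T4d hx
        (by rintro ⟨⟨h', hr⟩, -⟩; exact h4a hr) h4b
        (by rintro ⟨ho, ⟨h', hr⟩⟩; exact h4c ⟨ho, hr⟩)] at hyB
      exact hyB
  · intro hr
    by_cases h4a : q.r ⟨i - 1, hin⟩ x
    · rw [fBlk_T4a hn hd hi1 hi2 hx hin h4a,
        fBlk_T4a hn hd hi1 hi2 hy hin (q.iseqv.trans h4a hr)]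
    by_cases h4b : ∃ j : ℕ, i + 1 ≤ j ∧ j ≤ r / 2 + 1 ∧ x ∈ Kset q j
    · obtain ⟨j, hj1, hj2, ⟨⟨hjn, hrj⟩, -⟩⟩ := h4b
      rw [fBlk_T4b hn hd hi1 hi2 hx hj1 hj2 hjn hrj,
        fBlk_T4b hn hd hi1 hi2 hy hj1 hj2 hjn (q.iseqv.trans hrj hr)]
    by_cases h4c : r % 2 = 1 ∧ q.r ⟨r / 2 + 1, hsn⟩ x
    · rw [fBlk_T4c hn hd hi1 hi2 h4c.1 hx hsn h4c.2,
        fBlk_T4c hn hd hi1 hi2 h4c.1 hy hsn (q.iseqv.trans h4c.2 hr)]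
    · rw [fBlk_T4d hx (by rintro ⟨⟨h', hra⟩, -⟩; exact h4a hra) h4b
          (by rintro ⟨ho, ⟨h', hrc⟩⟩; exact h4c ⟨ho, hrc⟩),
        fBlk_T4d hy
          (by rintro ⟨⟨h', hra⟩, -⟩; exact h4a (q.iseqv.trans hra (q.iseqv.symm hr)))
          (by
            rintro ⟨j, hj1, hj2, ⟨⟨hjn, hrj⟩, -⟩⟩
            exact h4b ⟨j, hj1, hj2, ⟨⟨hjn, q.iseqv.trans hrj (q.iseqv.symm hr)⟩, by omega⟩⟩)
          (by
            rintro ⟨ho, ⟨h', hrc⟩⟩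
            exact h4c ⟨ho, q.iseqv.trans hrc (q.iseqv.symm hr)⟩)]
      exact Set.ext fun z =>
        ⟨fun hz => q.iseqv.trans (q.iseqv.symm hr) hz, fun hz => q.iseqv.trans hr hz⟩

lemma fW2 (a c : Fin n) (ha : (a : ℕ) < r / 2 + 1) (hc : r / 2 + 1 ≤ (c : ℕ)) :
    fBlk r i q a = fBlk r i q c ↔
      ∃ u ∈ fAtt r i (a : ℕ), ∃ hu : u < n, q.r ⟨u, hu⟩ c := by
  have hin : i - 1 < n := by omega
  have hsn : r / 2 + 1 < n := by omega
  by_cases hA : (a : ℕ) + 1 < i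
  · -- a below i-1 : unchanged block
    have hBa : fBlk r i q a = blkOf q a := fBlk_T3 hn hd hi1 hi2 hA
    have hAtt : fAtt r i (a : ℕ) = {(a : ℕ)} := if_pos hA
    constructor
    · intro hB
      have hcB : c ∈ blkOf q a := hBa ▸ (hB ▸ fBlk_self c)
      exact ⟨(a : ℕ), hAtt ▸ rfl, a.isLt, hcB⟩
    · rintro ⟨u, hu, hun, hruc⟩
      rw [hAtt, Set.mem_singleton_iff] at hu
      subst hu
      have hrac : q.r a c := hruc
      have hBc : fBlk r i q c = blkOf q c := by
        refine fBlk_T4d hc ?_ ?_ ?_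
        · rintro ⟨⟨h', hr⟩, -⟩
          have h3 : q.r ⟨i - 1, h'⟩ a := q.iseqv.trans hr (q.iseqv.symm hrac)
          have := hd (i - 1) h' a (by omega) (by omega) h3
          omega
        · rintro ⟨j, hj1, hj2, ⟨⟨hjn, hrj⟩, -⟩⟩
          have h3 : q.r ⟨j - 1, hjn⟩ a := q.iseqv.trans hrj (q.iseqv.symm hrac)
          have := hd (j - 1) hjn a (by omega) (by omega) h3
          omega
        · rintro ⟨ho, ⟨h', hrx⟩⟩
          have h3 : q.r ⟨r / 2 + 1, h'⟩ a := q.iseqv.trans hrx (q.iseqv.symm hrac)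
          have := hd (r / 2 + 1) h' a (by omega) (by omega) h3
          omega
      rw [hBa, hBc]
      exact Set.ext fun z =>
        ⟨fun hz => q.iseqv.trans (q.iseqv.symm hrac) hz, fun hz => q.iseqv.trans hrac hz⟩
  · by_cases hA2 : (a : ℕ) + 1 ≤ r / 2
    · -- middle initial point
      have hBa := fBlk_T1 (q := q) (i := i) (x := a) (by omega) hA2
      have hAtt : fAtt r i (a : ℕ) = {(a : ℕ) + 1} := by
        unfold fAtt; rw [if_neg hA, if_pos hA2]
      have han : (a : ℕ) + 1 < n := by omega
      constructor
      · intro hB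
        have hcB : c ∈ ptSet n ((a : ℕ) + 1) ∪ Kset q ((a : ℕ) + 2) := hBa ▸ (hB ▸ fBlk_self c)
        rcases hcB with hc1 | ⟨⟨h', hr⟩, -⟩
        · have : (c : ℕ) = (a : ℕ) + 1 - 1 := hc1
          omega
        · exact ⟨(a : ℕ) + 1, hAtt ▸ rfl, han, hr⟩
      · rintro ⟨u, hu, hun, hruc⟩
        rw [hAtt, Set.mem_singleton_iff] at hu
        subst hu
        have hBc := fBlk_T4b hn hd hi1 hi2 hc (j := (a : ℕ) + 2) (by omega) (by omega)
          (by omega : (a : ℕ) + 2 - 1 < n) hruc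
        rw [hBa, hBc]
        rfl
    · -- a = r/2
      have haeq : (a : ℕ) = r / 2 := by omega
      have hBa := fBlk_T2 (q := q) (i := i) haeq
      by_cases hpar : r % 2 = 0
      · have hAtt : fAtt r i (a : ℕ) = ∅ := by
          unfold fAtt; rw [if_neg hA, if_neg (by omega), if_neg (by omega)]
        rw [hAtt]
        simp only [Set.mem_empty_iff_false, false_and, exists_false, iff_false]
        intro hB
        rw [if_pos hpar] at hBa
        have hcB : c ∈ ptSet n (r / 2 + 1) := hBa ▸ (hB ▸ fBlk_self c)
        have : (c : ℕ) = r / 2 + 1 - 1 := hcB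
        omega
      · have hodd : r % 2 = 1 := by omega
        have hAtt : fAtt r i (a : ℕ) = {r / 2 + 1} := by
          unfold fAtt; rw [if_neg hA, if_neg (by omega), if_pos hodd]
        rw [if_neg hpar] at hBa
        constructor
        · intro hB
          have hcB : c ∈ ptSet n (r / 2 + 1) ∪ Xset q (r / 2 + 2) := hBa ▸ (hB ▸ fBlk_self c)
          rcases hcB with hc1 | ⟨h', hr⟩
          · have : (c : ℕ) = r / 2 + 1 - 1 := hc1
            omega
          · exact ⟨r / 2 + 1, hAtt ▸ rfl, hsn, hr⟩
        · rintro ⟨u, hu, hun, hruc⟩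
          rw [hAtt, Set.mem_singleton_iff] at hu
          subst hu
          rw [hBa, fBlk_T4c hn hd hi1 hi2 hodd hc hsn hruc]

lemma fW3 (a b : Fin n) (ha : (a : ℕ) < r / 2 + 1) (hb : (b : ℕ) < r / 2 + 1)
    (hB : fBlk r i q a = fBlk r i q b) : a = b := by
  have hbB := hB ▸ fBlk_self b
  by_cases hA : (a : ℕ) + 1 < i
  · rw [fBlk_T3 hn hd hi1 hi2 hA] at hbB
    have := hd (a : ℕ) a.isLt b (by omega) (by omega) hbB
    exact Fin.ext (by omega)
  · by_cases hA2 : (a : ℕ) + 1 ≤ r / 2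
    · rw [fBlk_T1 (by omega) hA2] at hbB
      rcases hbB with hb1 | ⟨⟨h', hr⟩, hne⟩
      · have : (b : ℕ) = (a : ℕ) + 1 - 1 := hb1
        exact Fin.ext (by omega)
      · have := hd ((a : ℕ) + 1) h' b (by omega) (by omega) hr
        omega
    · have haeq : (a : ℕ) = r / 2 := by omega
      rw [fBlk_T2 haeq] at hbB
      by_cases hpar : r % 2 = 0
      · rw [if_pos hpar] at hbB
        have : (b : ℕ) = r / 2 + 1 - 1 := hbB
        exact Fin.ext (by omega)
      · rw [if_neg hpar] at hbB
        rcases hbB with hb1 | ⟨h', hr⟩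
        · have : (b : ℕ) = r / 2 + 1 - 1 := hb1
          exact Fin.ext (by omega)
        · have := hd (r / 2 + 1) h' b (by omega) (by omega) hr
          omega

end FW

section FMem
variable {n r i : ℕ} {q : Setoid (Fin n)}

lemma fAtt_W4 (hi1 : 1 ≤ i) (hi2 : i ≤ r / 2 + 1) :
    ∀ m m' : ℕ, m < m' → m' < r / 2 + 1 → ∀ u ∈ fAtt r i m, ∀ u' ∈ fAtt r i m', u < u' := by
  intro m m' hmm' hm' u hu u' hu'
  unfold fAtt at hu hu'
  split_ifs at hu hu' <;>
    simp only [Set.mem_singleton_iff, Set.mem_empty_iff_false] at hu hu' <;> omega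

lemma fAtt_W5 (hi1 : 1 ≤ i) (hi2 : i ≤ r / 2 + 1) :
    ∀ m : ℕ, m < r / 2 + 1 → ∀ u ∈ fAtt r i m, u ≤ r / 2 + 1 := by
  intro m hm u hu
  unfold fAtt at hu
  split_ifs at hu <;>
    simp only [Set.mem_singleton_iff, Set.mem_empty_iff_false] at hu <;> omega

lemma fPart_mem (hrn : r < n - 1) (hq : q ∈ Wset n (r + 1)) (hi1 : 1 ≤ i)
    (hi2 : i ≤ r / 2 + 1) : fPart r i q ∈ Wset n r := by
  obtain ⟨hnc, hns, hdist⟩ := hq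
  have hn : r + 2 ≤ n := by omega
  have hd : ∀ u : ℕ, ∀ hu : u < n, ∀ x : Fin n,
      u ≤ (r + 1) / 2 → (x : ℕ) ≤ (r + 1) / 2 → q.r ⟨u, hu⟩ x → (x : ℕ) = u := by
    intro u hu x h1 h2 hr
    have h3 := hdist ⟨u, hu⟩ x h1 h2 hr
    exact (congrArg Fin.val h3).symm
  have hnsq : ∀ x : Fin n, (x : ℕ) < r / 2 + 1 → ∃ y : Fin n, y ≠ x ∧ q.r x y := by
    intro x hx
    have h2 : (x : ℕ) < (if (r + 1) % 2 = 0 then (r + 1) / 2 else (r + 1) / 2 + 1) := by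
      split_ifs with h <;> omega
    have h3 := hns x h2
    unfold IsSingletonPt at h3
    push_neg at h3
    obtain ⟨y, hy1, hy2⟩ := h3
    exact ⟨y, hy2, hy1⟩
  refine ⟨?_, ?_, ?_⟩
  · exact key_noncrossing q hnc (r / 2 + 1) (fBlk r i q) (fAtt r i)
      (fW1 hn hd hi1 hi2) (fW2 hn hd hi1 hi2) (fW3 hn hd hi1 hi2)
      (fAtt_W4 hi1 hi2) (fAtt_W5 hi1 hi2)
  · intro x hx hsing
    have hx' : (x : ℕ) < r / 2 + 1 := by split_ifs at hx <;> omega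
    by_cases hA : (x : ℕ) + 1 < i
    · obtain ⟨y, hy1, hy2⟩ := hnsq x hx'
      have hytail : r / 2 + 1 ≤ (y : ℕ) := by
        by_contra h
        push_neg at h
        have := hd (x : ℕ) x.isLt y (by omega) (by omega) hy2
        exact hy1 (Fin.ext (by omega))
      have hAtt : fAtt r i (x : ℕ) = {(x : ℕ)} := by unfold fAtt; rw [if_pos hA]
      have hB : fBlk r i q x = fBlk r i q y :=
        (fW2 hn hd hi1 hi2 x y hx' hytail).mpr ⟨(x : ℕ), hAtt ▸ rfl, x.isLt, hy2⟩
      exact hy1 (hsing y hB)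
    · by_cases hA2 : (x : ℕ) + 1 ≤ r / 2
      · have hxn : (x : ℕ) + 1 < n := by omega
        obtain ⟨y, hy1, hy2⟩ := hnsq ⟨(x : ℕ) + 1, hxn⟩ (by simpa using by omega)
        have hytail : r / 2 + 1 ≤ (y : ℕ) := by
          by_contra h
          push_neg at h
          have := hd ((x : ℕ) + 1) hxn y (by omega) (by omega) hy2
          exact hy1 (Fin.ext (by simpa using by omega))
        have hAtt : fAtt r i (x : ℕ) = {(x : ℕ) + 1} := by
          unfold fAtt; rw [if_neg hA, if_pos hA2]
        have hB : fBlk r i q x = fBlk r i q y :=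
          (fW2 hn hd hi1 hi2 x y hx' hytail).mpr ⟨(x : ℕ) + 1, hAtt ▸ rfl, hxn, hy2⟩
        have hyx : y ≠ x := fun h => by
          rw [h] at hytail
          omega
        exact hyx (hsing y hB)
      · -- x = r/2, forces r odd
        have hxe : (x : ℕ) = r / 2 := by omega
        have hodd : r % 2 = 1 := by
          by_contra h
          rw [if_pos (by omega)] at hx
          omega
        rw [if_neg (by omega)] at hx
        have hsn : r / 2 + 1 < n := by omega
        have hAtt : fAtt r i (x : ℕ) = {r / 2 + 1} := by
          unfold fAtt; rw [if_neg hA, if_neg (by omega), if_pos hodd]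
        have hB : fBlk r i q x = fBlk r i q ⟨r / 2 + 1, hsn⟩ :=
          (fW2 hn hd hi1 hi2 x ⟨r / 2 + 1, hsn⟩ hx' (by simp)).mpr
            ⟨r / 2 + 1, hAtt ▸ rfl, hsn, q.iseqv.refl _⟩
        have := hsing _ hB
        have : r / 2 + 1 = (x : ℕ) := congrArg Fin.val this
        omega
  · intro x y hx hy hr
    exact fW3 hn hd hi1 hi2 x y (by omega) (by omega) hr

end FMem

section Ginst
variable {n r i : ℕ} {q : Setoid (Fin n)}

/-- attach points of the partition `g(i,q)`. -/
def gAtt (r i : ℕ) : ℕ → Set ℕ := fun m =>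
  if m + 1 < i then {m} else if m + 1 = i then {i - 1}
  else if m + 1 ≤ r / 2 then {m + 1}
  else if r % 2 = 1 then {r / 2 + 1} else ∅

section withHyp
variable (hn : r + 2 ≤ n)
  (hd : ∀ u : ℕ, ∀ hu : u < n, ∀ x : Fin n,
    u ≤ (r + 1) / 2 → (x : ℕ) ≤ (r + 1) / 2 → q.r ⟨u, hu⟩ x → (x : ℕ) = u)
  (hi1 : 1 ≤ i) (hi2 : i ≤ r / 2)
include hn hd hi1 hi2

omit hd in
lemma gBlk_T1 {x : Fin n} (h1 : i + 1 ≤ (x : ℕ) + 1) (h2 : (x : ℕ) + 1 ≤ r / 2) :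
    gBlk r i q x = ptSet n ((x : ℕ) + 1) ∪ Kset q ((x : ℕ) + 2) := by
  unfold gBlk; rw [if_neg (by omega), if_pos ⟨h1, h2⟩]

omit hd in
lemma gBlk_T2 {x : Fin n} (h : (x : ℕ) = r / 2) :
    gBlk r i q x =
      (if r % 2 = 0 then ptSet n (r / 2 + 1) else ptSet n (r / 2 + 1) ∪ Xset q (r / 2 + 2)) := by
  unfold gBlk; rw [if_neg (by omega), if_neg (by omega), if_pos h]

lemma gBlk_T3 {x : Fin n} (hx : (x : ℕ) + 1 < i) :
    gBlk r i q x = blkOf q x := by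
  have hK : ∀ j : ℕ, 1 ≤ j → j ≤ r / 2 + 1 → (x : ℕ) ≠ j - 1 → x ∉ Kset q j := by
    intro j h1 h2 hne hmem
    obtain ⟨⟨hjn, hr⟩, -⟩ := hmem
    have := hd (j - 1) hjn x (by omega) (by omega) hr
    omega
  unfold gBlk
  rw [if_neg (by omega), if_neg (by omega), if_neg (by omega),
    if_neg (by
      rintro (h | h | h)
      · omega
      · exact hK i hi1 (by omega) (by omega) h
      · exact hK (i + 1) (by omega) (by omega) (by omega) h),
    if_neg (by rintro ⟨j, hj1, hj2, hj3⟩; exact hK j (by omega) hj2 (by omega) hj3),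
    if_neg (by
      rintro ⟨hodd, ⟨hX, hr⟩⟩
      have := hd (r / 2 + 1) hX x (by omega) (by omega) hr
      omega)]

omit hd in
lemma gBlk_T3' {x : Fin n} (hx : (x : ℕ) + 1 = i) :
    gBlk r i q x = ptSet n i ∪ Kset q i ∪ Kset q (i + 1) := by
  unfold gBlk
  rw [if_neg (by omega), if_neg (by omega), if_neg (by omega), if_pos (Or.inl hx)]

omit hd in
lemma gBlk_T4a {x : Fin n} (hx : r / 2 + 1 ≤ (x : ℕ)) (hin : i - 1 < n) (hin2 : i < n)
    (h : q.r ⟨i - 1, hin⟩ x ∨ q.r ⟨i, hin2⟩ x) :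
    gBlk r i q x = ptSet n i ∪ Kset q i ∪ Kset q (i + 1) := by
  unfold gBlk
  rw [if_neg (by omega), if_neg (by omega), if_neg (by omega), if_pos ?_]
  rcases h with h | h
  · exact Or.inr (Or.inl ⟨⟨hin, h⟩, by omega⟩)
  · exact Or.inr (Or.inr ⟨⟨(by omega : i + 1 - 1 < n), h⟩, by omega⟩)

lemma gBlk_T4b {x : Fin n} (hx : r / 2 + 1 ≤ (x : ℕ)) {j : ℕ} (hj1 : i + 2 ≤ j)
    (hj2 : j ≤ r / 2 + 1) (hjn : j - 1 < n) (h : q.r ⟨j - 1, hjn⟩ x) :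
    gBlk r i q x = ptSet n (j - 1) ∪ Kset q j := by
  have hxj : x ∈ Kset q j := (mem_Kset_iff hjn).mpr ⟨h, by omega⟩
  have key : ∀ u : ℕ, ∀ hu : u < n, u ≤ r / 2 → q.r ⟨u, hu⟩ x → u = j - 1 := by
    intro u hu hu2 hr
    have h3 : q.r ⟨u, hu⟩ ⟨j - 1, hjn⟩ := q.iseqv.trans hr (q.iseqv.symm h)
    have h4 : j - 1 = u := hd u hu ⟨j - 1, hjn⟩ (by omega)
      (by show j - 1 ≤ (r + 1) / 2; omega) h3
    omega
  have huniq : ∀ j' : ℕ, i + 2 ≤ j' → j' ≤ r / 2 + 1 → x ∈ Kset q j' → j' = j := by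
    rintro j' h1 h2 ⟨⟨hj'n, hr'⟩, -⟩
    have := key (j' - 1) hj'n (by omega) hr'
    omega
  unfold gBlk
  rw [if_neg (by omega), if_neg (by omega), if_neg (by omega),
    if_neg (by
      rintro (h' | ⟨⟨hin, hri⟩, -⟩ | ⟨⟨hin2, hri⟩, -⟩)
      · omega
      · have := key (i - 1) hin (by omega) hri
        omega
      · have := key (i + 1 - 1) hin2 (by omega) hri
        omega),
    if_pos ⟨j, hj1, hj2, hxj⟩]
  have hset : {j' : ℕ | i + 2 ≤ j' ∧ j' ≤ r / 2 + 1 ∧ x ∈ Kset q j'} = {j} := by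
    ext j'
    simp only [Set.mem_setOf_eq, Set.mem_singleton_iff]
    exact ⟨fun ⟨a, b, c⟩ => huniq j' a b c, fun h' => h' ▸ ⟨hj1, hj2, hxj⟩⟩
  rw [hset, Set.biUnion_singleton]

lemma gBlk_T4c (hodd : r % 2 = 1) {x : Fin n} (hx : r / 2 + 1 ≤ (x : ℕ)) (hsn : r / 2 + 1 < n)
    (h : q.r ⟨r / 2 + 1, hsn⟩ x) :
    gBlk r i q x = ptSet n (r / 2 + 1) ∪ Xset q (r / 2 + 2) := by
  have key : ∀ u : ℕ, ∀ hu : u < n, u ≤ r / 2 → q.r ⟨u, hu⟩ x → False := by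
    intro u hu hu2 hr
    have h3 : q.r ⟨u, hu⟩ ⟨r / 2 + 1, hsn⟩ := q.iseqv.trans hr (q.iseqv.symm h)
    have h4 : r / 2 + 1 = u := hd u hu ⟨r / 2 + 1, hsn⟩ (by omega)
      (by show r / 2 + 1 ≤ (r + 1) / 2; omega) h3
    omega
  unfold gBlk
  rw [if_neg (by omega), if_neg (by omega), if_neg (by omega),
    if_neg (by
      rintro (h' | ⟨⟨hin, hri⟩, -⟩ | ⟨⟨hin2, hri⟩, -⟩)
      · omega
      · exact key (i - 1) hin (by omega) hri
      · exact key (i + 1 - 1) hin2 (by omega) hri),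
    if_neg (by
      rintro ⟨j, hj1, hj2, ⟨⟨hjn, hrj⟩, -⟩⟩
      exact key (j - 1) hjn (by omega) hrj),
    if_pos ⟨hodd, ⟨(by omega : r / 2 + 2 - 1 < n), h⟩⟩]

omit hd in
lemma gBlk_T4d {x : Fin n} (hx : r / 2 + 1 ≤ (x : ℕ))
    (h1 : x ∉ Kset q i) (h1' : x ∉ Kset q (i + 1))
    (h2 : ¬ ∃ j : ℕ, i + 2 ≤ j ∧ j ≤ r / 2 + 1 ∧ x ∈ Kset q j)
    (h3 : ¬ (r % 2 = 1 ∧ x ∈ Xset q (r / 2 + 2))) : gBlk r i q x = blkOf q x := by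
  unfold gBlk
  rw [if_neg (by omega), if_neg (by omega), if_neg (by omega),
    if_neg (by
      rintro (h | h | h)
      · omega
      · exact h1 h
      · exact h1' h),
    if_neg h2, if_neg h3]

end withHyp

lemma gBlk_self (x : Fin n) : x ∈ gBlk r i q x := by
  unfold gBlk
  split_ifs with h0 h1 h2 h3 h4 h5 h6 h7
  · exact h1
  · exact q.iseqv.refl x
  · exact Or.inl rfl
  · exact h3
  · exact Or.inl h3
  · rcases h5 with h | h | h
    · exact Or.inl (Or.inl (by exact h ▸ (by omega : (x : ℕ) = i - 1)))
    · exact Or.inl (Or.inr h)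
    · exact Or.inr h
  · obtain ⟨j, hj⟩ := h6
    exact Set.mem_biUnion hj (Or.inr hj.2.2)
  · exact Or.inr h7.2
  · exact q.iseqv.refl x

end Ginst

section GW
variable {n r i : ℕ} {q : Setoid (Fin n)}
  (hn : r + 2 ≤ n)
  (hd : ∀ u : ℕ, ∀ hu : u < n, ∀ x : Fin n,
    u ≤ (r + 1) / 2 → (x : ℕ) ≤ (r + 1) / 2 → q.r ⟨u, hu⟩ x → (x : ℕ) = u)
  (hi1 : 1 ≤ i) (hi2 : i ≤ r / 2)
include hn hd hi1 hi2

lemma gW1 (hin : i - 1 < n) (hin2 : i < n) (x y : Fin n)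
    (hx : r / 2 + 1 ≤ (x : ℕ)) (hy : r / 2 + 1 ≤ (y : ℕ)) :
    gBlk r i q x = gBlk r i q y ↔ (mergeSetoid q ⟨i - 1, hin⟩ ⟨i, hin2⟩).r x y := by
  have hsn : r / 2 + 1 < n := by omega
  rw [mergeSetoid_r]
  constructor
  · intro hB
    have hyB : y ∈ gBlk r i q x := hB ▸ gBlk_self y
    by_cases hEx : q.r ⟨i - 1, hin⟩ x ∨ q.r ⟨i, hin2⟩ x
    · rw [gBlk_T4a hn hi1 hi2 hx hin hin2 hEx] at hyB
      have hEx' : q.r x ⟨i - 1, hin⟩ ∨ q.r x ⟨i, hin2⟩ :=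
        hEx.imp (fun h => q.iseqv.symm h) (fun h => q.iseqv.symm h)
      rcases hyB with (hp | ⟨⟨h', hr⟩, -⟩) | ⟨⟨h', hr⟩, -⟩
      · have : (y : ℕ) = i - 1 := hp
        omega
      · exact Or.inr ⟨hEx', Or.inl (q.iseqv.symm hr)⟩
      · exact Or.inr ⟨hEx', Or.inr (q.iseqv.symm hr)⟩
    by_cases h4b : ∃ j : ℕ, i + 2 ≤ j ∧ j ≤ r / 2 + 1 ∧ x ∈ Kset q j
    · obtain ⟨j, hj1, hj2, ⟨⟨hjn, hrj⟩, -⟩⟩ := h4b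
      rw [gBlk_T4b hn hd hi1 hi2 hx hj1 hj2 hjn hrj] at hyB
      rcases hyB with hp | ⟨⟨h', hr'⟩, -⟩
      · have : (y : ℕ) = j - 1 - 1 := hp
        omega
      · exact Or.inl (q.iseqv.trans (q.iseqv.symm hrj) hr')
    by_cases h4c : r % 2 = 1 ∧ q.r ⟨r / 2 + 1, hsn⟩ x
    · rw [gBlk_T4c hn hd hi1 hi2 h4c.1 hx hsn h4c.2] at hyB
      rcases hyB with hp | ⟨h', hr'⟩
      · have : (y : ℕ) = r / 2 + 1 - 1 := hp
        omega
      · exact Or.inl (q.iseqv.trans (q.iseqv.symm h4c.2) hr')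
    · rw [gBlk_T4d hn hi1 hi2 hx
        (by rintro ⟨⟨h', hr⟩, -⟩; exact hEx (Or.inl hr))
        (by rintro ⟨⟨h', hr⟩, -⟩; exact hEx (Or.inr hr)) h4b
        (by rintro ⟨ho, ⟨h', hr⟩⟩; exact h4c ⟨ho, hr⟩)] at hyB
      exact Or.inl hyB
  · rintro (hqxy | ⟨hEx', hEy'⟩)
    · by_cases hEx : q.r ⟨i - 1, hin⟩ x ∨ q.r ⟨i, hin2⟩ x
      · have hEy : q.r ⟨i - 1, hin⟩ y ∨ q.r ⟨i, hin2⟩ y :=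
          hEx.imp (fun h => q.iseqv.trans h hqxy) (fun h => q.iseqv.trans h hqxy)
        rw [gBlk_T4a hn hi1 hi2 hx hin hin2 hEx, gBlk_T4a hn hi1 hi2 hy hin hin2 hEy]
      by_cases h4b : ∃ j : ℕ, i + 2 ≤ j ∧ j ≤ r / 2 + 1 ∧ x ∈ Kset q j
      · obtain ⟨j, hj1, hj2, ⟨⟨hjn, hrj⟩, -⟩⟩ := h4b
        rw [gBlk_T4b hn hd hi1 hi2 hx hj1 hj2 hjn hrj,
          gBlk_T4b hn hd hi1 hi2 hy hj1 hj2 hjn (q.iseqv.trans hrj hqxy)]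
      by_cases h4c : r % 2 = 1 ∧ q.r ⟨r / 2 + 1, hsn⟩ x
      · rw [gBlk_T4c hn hd hi1 hi2 h4c.1 hx hsn h4c.2,
          gBlk_T4c hn hd hi1 hi2 h4c.1 hy hsn (q.iseqv.trans h4c.2 hqxy)]
      · rw [gBlk_T4d hn hi1 hi2 hx
            (by rintro ⟨⟨h', hr⟩, -⟩; exact hEx (Or.inl hr))
            (by rintro ⟨⟨h', hr⟩, -⟩; exact hEx (Or.inr hr)) h4b
            (by rintro ⟨ho, ⟨h', hr⟩⟩; exact h4c ⟨ho, hr⟩),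
          gBlk_T4d hn hi1 hi2 hy
            (by
              rintro ⟨⟨h', hr⟩, -⟩
              exact hEx (Or.inl (q.iseqv.trans hr (q.iseqv.symm hqxy))))
            (by
              rintro ⟨⟨h', hr⟩, -⟩
              exact hEx (Or.inr (q.iseqv.trans hr (q.iseqv.symm hqxy))))
            (by
              rintro ⟨j, hj1, hj2, ⟨⟨hjn, hrj⟩, -⟩⟩
              exact h4b ⟨j, hj1, hj2,
                ⟨⟨hjn, q.iseqv.trans hrj (q.iseqv.symm hqxy)⟩, by omega⟩⟩)
            (by
              rintro ⟨ho, ⟨h', hrc⟩⟩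
              exact h4c ⟨ho, q.iseqv.trans hrc (q.iseqv.symm hqxy)⟩)]
        exact Set.ext fun z =>
          ⟨fun hz => q.iseqv.trans (q.iseqv.symm hqxy) hz, fun hz => q.iseqv.trans hqxy hz⟩
    · have hEx : q.r ⟨i - 1, hin⟩ x ∨ q.r ⟨i, hin2⟩ x :=
        hEx'.imp (fun h => q.iseqv.symm h) (fun h => q.iseqv.symm h)
      have hEy : q.r ⟨i - 1, hin⟩ y ∨ q.r ⟨i, hin2⟩ y :=
        hEy'.imp (fun h => q.iseqv.symm h) (fun h => q.iseqv.symm h)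
      rw [gBlk_T4a hn hi1 hi2 hx hin hin2 hEx, gBlk_T4a hn hi1 hi2 hy hin hin2 hEy]

lemma gW2 (hin : i - 1 < n) (hin2 : i < n) (a c : Fin n)
    (ha : (a : ℕ) < r / 2 + 1) (hc : r / 2 + 1 ≤ (c : ℕ)) :
    gBlk r i q a = gBlk r i q c ↔
      ∃ u ∈ gAtt r i (a : ℕ), ∃ hu : u < n,
        (mergeSetoid q ⟨i - 1, hin⟩ ⟨i, hin2⟩).r ⟨u, hu⟩ c := by
  have hsn : r / 2 + 1 < n := by omega
  by_cases hA : (a : ℕ) + 1 < i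
  · have hBa : gBlk r i q a = blkOf q a := gBlk_T3 hn hd hi1 hi2 hA
    have hAtt : gAtt r i (a : ℕ) = {(a : ℕ)} := by unfold gAtt; rw [if_pos hA]
    constructor
    · intro hB
      have hcB : c ∈ blkOf q a := hBa ▸ (hB ▸ gBlk_self c)
      exact ⟨(a : ℕ), hAtt ▸ rfl, a.isLt, Or.inl hcB⟩
    · rintro ⟨u, hu, hun, hruc⟩
      rw [hAtt, Set.mem_singleton_iff] at hu
      subst hu
      rcases hruc with hruc | ⟨hEa, hEc⟩
      · have hrac : q.r a c := hruc
        have hBc : gBlk r i q c = blkOf q c := by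
          refine gBlk_T4d hn hi1 hi2 hc ?_ ?_ ?_ ?_
          · rintro ⟨⟨h', hr⟩, -⟩
            have h3 : q.r ⟨i - 1, h'⟩ a := q.iseqv.trans hr (q.iseqv.symm hrac)
            have := hd (i - 1) h' a (by omega) (by omega) h3
            omega
          · rintro ⟨⟨h', hr⟩, -⟩
            have h3 : q.r ⟨i + 1 - 1, h'⟩ a := q.iseqv.trans hr (q.iseqv.symm hrac)
            have := hd (i + 1 - 1) h' a (by omega) (by omega) h3
            omega
          · rintro ⟨j, hj1, hj2, ⟨⟨hjn, hrj⟩, -⟩⟩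
            have h3 : q.r ⟨j - 1, hjn⟩ a := q.iseqv.trans hrj (q.iseqv.symm hrac)
            have := hd (j - 1) hjn a (by omega) (by omega) h3
            omega
          · rintro ⟨ho, ⟨h', hrx⟩⟩
            have h3 : q.r ⟨r / 2 + 1, h'⟩ a := q.iseqv.trans hrx (q.iseqv.symm hrac)
            have := hd (r / 2 + 1) h' a (by omega) (by omega) h3
            omega
        rw [hBa, hBc]
        exact Set.ext fun z =>
          ⟨fun hz => q.iseqv.trans (q.iseqv.symm hrac) hz, fun hz => q.iseqv.trans hrac hz⟩
      · exfalso
        rcases hEa with h | h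
        · have h5 : i - 1 = (a : ℕ) := hd (a : ℕ) a.isLt ⟨i - 1, hin⟩ (by omega)
            (by show i - 1 ≤ (r + 1) / 2; omega) h
          omega
        · have h5 : i = (a : ℕ) := hd (a : ℕ) a.isLt ⟨i, hin2⟩ (by omega)
            (by show i ≤ (r + 1) / 2; omega) h
          omega
  · by_cases hA1 : (a : ℕ) + 1 = i
    · have hBa := gBlk_T3' (q := q) hn hi1 hi2 (x := a) hA1
      have hAtt : gAtt r i (a : ℕ) = {i - 1} := by
        unfold gAtt; rw [if_neg hA, if_pos hA1]
      constructor
      · intro hB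
        have hcB : c ∈ ptSet n i ∪ Kset q i ∪ Kset q (i + 1) := hBa ▸ (hB ▸ gBlk_self c)
        rcases hcB with (hp | ⟨⟨h', hr⟩, -⟩) | ⟨⟨h', hr⟩, -⟩
        · have : (c : ℕ) = i - 1 := hp
          omega
        · exact ⟨i - 1, hAtt ▸ rfl, hin, Or.inl hr⟩
        · exact ⟨i - 1, hAtt ▸ rfl, hin,
            Or.inr ⟨Or.inl (q.iseqv.refl _), Or.inr (q.iseqv.symm hr)⟩⟩
      · rintro ⟨u, hu, hun, hruc⟩
        rw [hAtt, Set.mem_singleton_iff] at hu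
        subst hu
        have hEc : q.r ⟨i - 1, hin⟩ c ∨ q.r ⟨i, hin2⟩ c := by
          rcases hruc with hruc | ⟨-, hEc⟩
          · exact Or.inl hruc
          · exact hEc.imp (fun h => q.iseqv.symm h) (fun h => q.iseqv.symm h)
        rw [hBa, gBlk_T4a hn hi1 hi2 hc hin hin2 hEc]
    · by_cases hA2 : (a : ℕ) + 1 ≤ r / 2
      · have hBa := gBlk_T1 (q := q) hn hi1 hi2 (x := a) (by omega) hA2
        have hAtt : gAtt r i (a : ℕ) = {(a : ℕ) + 1} := by
          unfold gAtt; rw [if_neg hA, if_neg hA1, if_pos hA2]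
        have han : (a : ℕ) + 1 < n := by omega
        constructor
        · intro hB
          have hcB : c ∈ ptSet n ((a : ℕ) + 1) ∪ Kset q ((a : ℕ) + 2) :=
            hBa ▸ (hB ▸ gBlk_self c)
          rcases hcB with hp | ⟨⟨h', hr⟩, -⟩
          · have : (c : ℕ) = (a : ℕ) + 1 - 1 := hp
            omega
          · exact ⟨(a : ℕ) + 1, hAtt ▸ rfl, han, Or.inl hr⟩
        · rintro ⟨u, hu, hun, hruc⟩
          rw [hAtt, Set.mem_singleton_iff] at hu
          subst hu
          rcases hruc with hruc | ⟨hEa, -⟩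
          · have hBc := gBlk_T4b hn hd hi1 hi2 hc (j := (a : ℕ) + 2) (by omega) (by omega)
              (by omega : (a : ℕ) + 2 - 1 < n) hruc
            rw [hBa, hBc]
            rfl
          · exfalso
            rcases hEa with h | h
            · have h5 : i - 1 = (a : ℕ) + 1 := hd ((a : ℕ) + 1) hun ⟨i - 1, hin⟩ (by omega)
                (by show i - 1 ≤ (r + 1) / 2; omega) h
              omega
            · have h5 : i = (a : ℕ) + 1 := hd ((a : ℕ) + 1) hun ⟨i, hin2⟩ (by omega)
                (by show i ≤ (r + 1) / 2; omega) h
              omega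
      · have haeq : (a : ℕ) = r / 2 := by omega
        have hBa := gBlk_T2 (q := q) hn hi1 hi2 (x := a) haeq
        by_cases hpar : r % 2 = 0
        · have hAtt : gAtt r i (a : ℕ) = ∅ := by
            unfold gAtt; rw [if_neg hA, if_neg hA1, if_neg (by omega), if_neg (by omega)]
          rw [hAtt]
          simp only [Set.mem_empty_iff_false, false_and, exists_false, iff_false]
          intro hB
          rw [if_pos hpar] at hBa
          have hcB : c ∈ ptSet n (r / 2 + 1) := hBa ▸ (hB ▸ gBlk_self c)
          have : (c : ℕ) = r / 2 + 1 - 1 := hcB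
          omega
        · have hodd : r % 2 = 1 := by omega
          have hAtt : gAtt r i (a : ℕ) = {r / 2 + 1} := by
            unfold gAtt; rw [if_neg hA, if_neg hA1, if_neg (by omega), if_pos hodd]
          rw [if_neg hpar] at hBa
          constructor
          · intro hB
            have hcB : c ∈ ptSet n (r / 2 + 1) ∪ Xset q (r / 2 + 2) :=
              hBa ▸ (hB ▸ gBlk_self c)
            rcases hcB with hp | ⟨h', hr⟩
            · have : (c : ℕ) = r / 2 + 1 - 1 := hp
              omega
            · exact ⟨r / 2 + 1, hAtt ▸ rfl, hsn, Or.inl hr⟩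
          · rintro ⟨u, hu, hun, hruc⟩
            rw [hAtt, Set.mem_singleton_iff] at hu
            subst hu
            rcases hruc with hruc | ⟨hEa, -⟩
            · rw [hBa, gBlk_T4c hn hd hi1 hi2 hodd hc hsn hruc]
            · exfalso
              rcases hEa with h | h
              · have h5 : i - 1 = r / 2 + 1 := hd (r / 2 + 1) hun ⟨i - 1, hin⟩ (by omega)
                  (by show i - 1 ≤ (r + 1) / 2; omega) h
                omega
              · have h5 : i = r / 2 + 1 := hd (r / 2 + 1) hun ⟨i, hin2⟩ (by omega)
                  (by show i ≤ (r + 1) / 2; omega) h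
                omega

lemma gW3 (a b : Fin n) (ha : (a : ℕ) < r / 2 + 1) (hb : (b : ℕ) < r / 2 + 1)
    (hB : gBlk r i q a = gBlk r i q b) : a = b := by
  have hbB := hB ▸ gBlk_self b
  by_cases hA : (a : ℕ) + 1 < i
  · rw [gBlk_T3 hn hd hi1 hi2 hA] at hbB
    have := hd (a : ℕ) a.isLt b (by omega) (by omega) hbB
    exact Fin.ext (by omega)
  · by_cases hA1 : (a : ℕ) + 1 = i
    · rw [gBlk_T3' hn hi1 hi2 hA1] at hbB
      rcases hbB with (hp | ⟨⟨h', hr⟩, hne⟩) | ⟨⟨h', hr⟩, hne⟩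
      · have : (b : ℕ) = i - 1 := hp
        exact Fin.ext (by omega)
      · have := hd (i - 1) h' b (by omega) (by omega) hr
        omega
      · have := hd (i + 1 - 1) h' b (by omega) (by omega) hr
        omega
    · by_cases hA2 : (a : ℕ) + 1 ≤ r / 2
      · rw [gBlk_T1 hn hi1 hi2 (by omega) hA2] at hbB
        rcases hbB with hp | ⟨⟨h', hr⟩, hne⟩
        · have : (b : ℕ) = (a : ℕ) + 1 - 1 := hp
          exact Fin.ext (by omega)
        · have := hd ((a : ℕ) + 1) h' b (by omega) (by omega) hr
          omega
      · have haeq : (a : ℕ) = r / 2 := by omega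
        rw [gBlk_T2 hn hi1 hi2 haeq] at hbB
        by_cases hpar : r % 2 = 0
        · rw [if_pos hpar] at hbB
          have : (b : ℕ) = r / 2 + 1 - 1 := hbB
          exact Fin.ext (by omega)
        · rw [if_neg hpar] at hbB
          rcases hbB with hp | ⟨h', hr⟩
          · have : (b : ℕ) = r / 2 + 1 - 1 := hp
            exact Fin.ext (by omega)
          · have := hd (r / 2 + 1) h' b (by omega) (by omega) hr
            omega

end GW

section GMem
variable {n r i : ℕ} {q : Setoid (Fin n)}

lemma gAtt_W4 (hi1 : 1 ≤ i) (hi2 : i ≤ r / 2) :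
    ∀ m m' : ℕ, m < m' → m' < r / 2 + 1 → ∀ u ∈ gAtt r i m, ∀ u' ∈ gAtt r i m', u < u' := by
  intro m m' hmm' hm' u hu u' hu'
  unfold gAtt at hu hu'
  split_ifs at hu hu' <;>
    simp only [Set.mem_singleton_iff, Set.mem_empty_iff_false] at hu hu' <;> omega

lemma gAtt_W5 (hi1 : 1 ≤ i) (hi2 : i ≤ r / 2) :
    ∀ m : ℕ, m < r / 2 + 1 → ∀ u ∈ gAtt r i m, u ≤ r / 2 + 1 := by
  intro m hm u hu
  unfold gAtt at hu
  split_ifs at hu <;>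
    simp only [Set.mem_singleton_iff, Set.mem_empty_iff_false] at hu <;> omega

lemma gPart_mem_main (hrn : r < n - 1) (hq : q ∈ Wset n (r + 1)) (hi1 : 1 ≤ i)
    (hi2 : i ≤ r / 2) : gPart r i q ∈ Wset n r := by
  obtain ⟨hnc, hns, hdist⟩ := hq
  have hn : r + 2 ≤ n := by omega
  have hin : i - 1 < n := by omega
  have hin2 : i < n := by omega
  have hd : ∀ u : ℕ, ∀ hu : u < n, ∀ x : Fin n,
      u ≤ (r + 1) / 2 → (x : ℕ) ≤ (r + 1) / 2 → q.r ⟨u, hu⟩ x → (x : ℕ) = u := by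
    intro u hu x h1 h2 hr
    have h3 := hdist ⟨u, hu⟩ x h1 h2 hr
    exact (congrArg Fin.val h3).symm
  have hnsq : ∀ x : Fin n, (x : ℕ) < r / 2 + 1 → ∃ y : Fin n, y ≠ x ∧ q.r x y := by
    intro x hx
    have h2 : (x : ℕ) < (if (r + 1) % 2 = 0 then (r + 1) / 2 else (r + 1) / 2 + 1) := by
      split_ifs with h <;> omega
    have h3 := hns x h2
    unfold IsSingletonPt at h3
    push_neg at h3
    obtain ⟨y, hy1, hy2⟩ := h3
    exact ⟨y, hy2, hy1⟩
  have hq'nc : ¬ IsCrossing (mergeSetoid q ⟨i - 1, hin⟩ ⟨i, hin2⟩) :=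
    merge_noncrossing hnc _ _ (by show i = i - 1 + 1; omega)
  refine ⟨?_, ?_, ?_⟩
  · exact key_noncrossing _ hq'nc (r / 2 + 1) (gBlk r i q) (gAtt r i)
      (gW1 hn hd hi1 hi2 hin hin2) (gW2 hn hd hi1 hi2 hin hin2) (gW3 hn hd hi1 hi2)
      (gAtt_W4 hi1 hi2) (gAtt_W5 hi1 hi2)
  · intro x hx hsing
    have hx' : (x : ℕ) < r / 2 + 1 := by split_ifs at hx <;> omega
    by_cases hA : (x : ℕ) + 1 < i
    · obtain ⟨y, hy1, hy2⟩ := hnsq x hx'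
      have hytail : r / 2 + 1 ≤ (y : ℕ) := by
        by_contra h
        push_neg at h
        have := hd (x : ℕ) x.isLt y (by omega) (by omega) hy2
        exact hy1 (Fin.ext (by omega))
      have hAtt : gAtt r i (x : ℕ) = {(x : ℕ)} := by unfold gAtt; rw [if_pos hA]
      have hB : gBlk r i q x = gBlk r i q y :=
        (gW2 hn hd hi1 hi2 hin hin2 x y hx' hytail).mpr
          ⟨(x : ℕ), hAtt ▸ rfl, x.isLt, Or.inl hy2⟩
      exact hy1 (hsing y hB)
    · by_cases hA1 : (x : ℕ) + 1 = i
      · obtain ⟨y, hy1, hy2⟩ := hnsq x hx'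
        have hytail : r / 2 + 1 ≤ (y : ℕ) := by
          by_contra h
          push_neg at h
          have := hd (x : ℕ) x.isLt y (by omega) (by omega) hy2
          exact hy1 (Fin.ext (by omega))
        have hAtt : gAtt r i (x : ℕ) = {i - 1} := by
          unfold gAtt; rw [if_neg hA, if_pos hA1]
        have hxeq : x = ⟨i - 1, hin⟩ := Fin.ext (show (x : ℕ) = i - 1 by omega)
        have hB : gBlk r i q x = gBlk r i q y :=
          (gW2 hn hd hi1 hi2 hin hin2 x y hx' hytail).mpr
            ⟨i - 1, hAtt ▸ rfl, hin, Or.inl (hxeq ▸ hy2)⟩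
        exact hy1 (hsing y hB)
      · by_cases hA2 : (x : ℕ) + 1 ≤ r / 2
        · have hxn : (x : ℕ) + 1 < n := by omega
          obtain ⟨y, hy1, hy2⟩ := hnsq ⟨(x : ℕ) + 1, hxn⟩ (by simpa using by omega)
          have hytail : r / 2 + 1 ≤ (y : ℕ) := by
            by_contra h
            push_neg at h
            have := hd ((x : ℕ) + 1) hxn y (by omega) (by omega) hy2
            exact hy1 (Fin.ext (by simpa using by omega))
          have hAtt : gAtt r i (x : ℕ) = {(x : ℕ) + 1} := by
            unfold gAtt; rw [if_neg hA, if_neg hA1, if_pos hA2]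
          have hB : gBlk r i q x = gBlk r i q y :=
            (gW2 hn hd hi1 hi2 hin hin2 x y hx' hytail).mpr
              ⟨(x : ℕ) + 1, hAtt ▸ rfl, hxn, Or.inl hy2⟩
          have hyx : y ≠ x := fun h => by
            rw [h] at hytail
            omega
          exact hyx (hsing y hB)
        · have hxe : (x : ℕ) = r / 2 := by omega
          have hodd : r % 2 = 1 := by
            by_contra h
            rw [if_pos (by omega)] at hx
            omega
          rw [if_neg (by omega)] at hx
          have hsn : r / 2 + 1 < n := by omega
          have hAtt : gAtt r i (x : ℕ) = {r / 2 + 1} := by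
            unfold gAtt; rw [if_neg hA, if_neg hA1, if_neg (by omega), if_pos hodd]
          have hB : gBlk r i q x = gBlk r i q ⟨r / 2 + 1, hsn⟩ :=
            (gW2 hn hd hi1 hi2 hin hin2 x ⟨r / 2 + 1, hsn⟩ hx' (by simp)).mpr
              ⟨r / 2 + 1, hAtt ▸ rfl, hsn, Or.inl (q.iseqv.refl _)⟩
          have h6 := hsing _ hB
          have h7 : r / 2 + 1 = (x : ℕ) := congrArg Fin.val h6
          omega
  · intro x y hx hy hr
    exact gW3 hn hd hi1 hi2 x y (by omega) (by omega) hr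

lemma gPart_mem_special (hrn : r < n - 1) (hq : q ∈ Wset n (r + 1)) (hodd : r % 2 = 1) :
    gPart r (r / 2 + 1) q ∈ Wset n r := by
  obtain ⟨hnc, hns, hdist⟩ := hq
  have hn : r + 2 ≤ n := by omega
  have hs : r / 2 < n := by omega
  have hs1 : r / 2 + 1 < n := by omega
  have hd : ∀ u : ℕ, ∀ hu : u < n, ∀ x : Fin n,
      u ≤ (r + 1) / 2 → (x : ℕ) ≤ (r + 1) / 2 → q.r ⟨u, hu⟩ x → (x : ℕ) = u := by
    intro u hu x h1 h2 hr
    have h3 := hdist ⟨u, hu⟩ x h1 h2 hr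
    exact (congrArg Fin.val h3).symm
  have hnsq : ∀ x : Fin n, (x : ℕ) < r / 2 + 1 → ∃ y : Fin n, y ≠ x ∧ q.r x y := by
    intro x hx
    have h2 : (x : ℕ) < (if (r + 1) % 2 = 0 then (r + 1) / 2 else (r + 1) / 2 + 1) := by
      split_ifs with h <;> omega
    have h3 := hns x h2
    unfold IsSingletonPt at h3
    push_neg at h3
    obtain ⟨y, hy1, hy2⟩ := h3
    exact ⟨y, hy2, hy1⟩
  set U : Set (Fin n) := Xset q (r / 2 + 1) ∪ Xset q (r / 2 + 2) with hUdef
  have hB : ∀ x : Fin n, gBlk r (r / 2 + 1) q x = if x ∈ U then U else blkOf q x := by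
    intro x
    unfold gBlk
    rw [if_pos rfl]
  have hU : ∀ x : Fin n, x ∈ U ↔ (q.r x ⟨r / 2, hs⟩ ∨ q.r x ⟨r / 2 + 1, hs1⟩) := by
    intro x
    constructor
    · rintro (⟨h', hr⟩ | ⟨h', hr⟩)
      · exact Or.inl (q.iseqv.symm hr)
      · exact Or.inr (q.iseqv.symm hr)
    · rintro (h | h)
      · exact Or.inl ⟨(by omega : r / 2 + 1 - 1 < n), q.iseqv.symm h⟩
      · exact Or.inr ⟨(by omega : r / 2 + 2 - 1 < n), q.iseqv.symm h⟩
  have hrel : ∀ x y : Fin n, gBlk r (r / 2 + 1) q x = gBlk r (r / 2 + 1) q y ↔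
      (mergeSetoid q ⟨r / 2, hs⟩ ⟨r / 2 + 1, hs1⟩).r x y := by
    intro x y
    rw [hB x, hB y, mergeSetoid_r]
    by_cases hx : x ∈ U <;> by_cases hy : y ∈ U
    · rw [if_pos hx, if_pos hy]
      exact iff_of_true rfl (Or.inr ⟨(hU x).mp hx, (hU y).mp hy⟩)
    · rw [if_pos hx, if_neg hy]
      refine iff_of_false (fun h => hy (h ▸ q.iseqv.refl y)) ?_
      rintro (h | ⟨-, hEy⟩)
      · refine hy ((hU y).mpr ?_)
        exact ((hU x).mp hx).imp (fun h' => q.iseqv.trans (q.iseqv.symm h) h')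
          (fun h' => q.iseqv.trans (q.iseqv.symm h) h')
      · exact hy ((hU y).mpr hEy)
    · rw [if_neg hx, if_pos hy]
      refine iff_of_false (fun h => hx (h.symm ▸ q.iseqv.refl x)) ?_
      rintro (h | ⟨hEx, -⟩)
      · refine hx ((hU x).mpr ?_)
        exact ((hU y).mp hy).imp (fun h' => q.iseqv.trans h h')
          (fun h' => q.iseqv.trans h h')
      · exact hx ((hU x).mpr hEx)
    · rw [if_neg hx, if_neg hy]
      constructor
      · intro h
        exact Or.inl (h ▸ q.iseqv.refl y : y ∈ blkOf q x)
      · rintro (h | ⟨hEx, -⟩)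
        · exact Set.ext fun z =>
            ⟨fun hz => q.iseqv.trans (q.iseqv.symm h) hz, fun hz => q.iseqv.trans h hz⟩
        · exact absurd ((hU x).mpr hEx) hx
  refine ⟨?_, ?_, ?_⟩
  · rintro ⟨a, b, c, d, h1, h2, h3, hac, hbd, hnab⟩
    exact merge_noncrossing hnc ⟨r / 2, hs⟩ ⟨r / 2 + 1, hs1⟩ rfl
      ⟨a, b, c, d, h1, h2, h3, (hrel a c).mp hac, (hrel b d).mp hbd,
        fun h => hnab ((hrel a b).mpr h)⟩
  · intro x hx hsing
    have hx' : (x : ℕ) < r / 2 + 1 := by split_ifs at hx <;> omega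
    obtain ⟨y, hy1, hy2⟩ := hnsq x hx'
    exact hy1 (hsing y ((hrel x y).mpr (Or.inl hy2)))
  · intro x y hx hy hr
    rcases (hrel x y).mp hr with h | ⟨hEx, hEy⟩
    · exact hdist x y (by omega) (by omega) h
    · have hx2 : (x : ℕ) = r / 2 := by
        rcases hEx with h | h
        · have := hd (r / 2) hs x (by omega) (by omega) (q.iseqv.symm h)
          omega
        · have := hd (r / 2 + 1) hs1 x (by omega) (by omega) (q.iseqv.symm h)
          omega
      have hy2 : (y : ℕ) = r / 2 := by
        rcases hEy with h | h
        · have := hd (r / 2) hs y (by omega) (by omega) (q.iseqv.symm h)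
          omega
        · have := hd (r / 2 + 1) hs1 y (by omega) (by omega) (q.iseqv.symm h)
          omega
      exact Fin.ext (by omega)

end GMem


/-- For `0 ≤ r < n-1`, `s = ⌊r/2⌋` and `q ∈ W(n,r+1)`: `f(i,q) ∈ W(n,r)` for all
`1 ≤ i ≤ s+1`, and `g(i,q) ∈ W(n,r)` for all `1 ≤ i ≤ t`, where `t = s` for even `r`
and `t = s+1` for odd `r`. -/
theorem fPart_gPart_mem_Wset (n r : ℕ) (hrn : r < n - 1)
    (q : Setoid (Fin n)) (hq : q ∈ Wset n (r + 1)) :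
    (∀ i : ℕ, 1 ≤ i → i ≤ r / 2 + 1 → fPart r i q ∈ Wset n r) ∧
    (∀ i : ℕ, 1 ≤ i → i ≤ (if r % 2 = 0 then r / 2 else r / 2 + 1) →
      gPart r i q ∈ Wset n r) := by
  constructor
  · intro i hi1 hi2
    exact fPart_mem hrn hq hi1 hi2
  · intro i hi1 hi2
    by_cases hir : i ≤ r / 2
    · exact gPart_mem_main hrn hq hi1 hir
    · have hodd : r % 2 = 1 := by
        by_contra h
        rw [if_pos (by omega)] at hi2
        omega
      rw [if_neg (by omega)] at hi2
      have hieq : i = r / 2 + 1 := by omega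
      subst hieq
      exact gPart_mem_special hrn hq hodd
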